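/- On ℝ[y₁,…,yₙ], for every m ≥ 0 the normal-ordered power satisfies g^m ∘ tr^m = 4^m · ((𝒞−𝒩+1)/2)_m · ((𝒞+𝒩−1)/2)_m evaluated as an operator, where (x)_m = x(x+1)⋯(x+m−1) is the Pochhammer symbol applied to the commuting operators (𝒞−𝒩+1)/2 and (𝒞+𝒩−1)/2. [Equivalently, on g^k Φ with Φ harmonic of degree s, g^m tr^m acts by the scalar ∏_{j=0}^{m−1} (2k−2j)(2s+2k+n−2−2j).] -/

import Mathlib

/-!
Commuting the Laplacian past `g = r²` gives `tr ∘ g = g ∘ tr + 4𝒩 + 2n` and `𝒩 ∘ g = g ∘ 𝒩 + 2g`.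
Hence on `g^k Φ`, with `Φ` harmonic and `𝒩 Φ = c Φ`, the Euler operator acts by `c + 2k` and
`tr (g^k Φ) = 2k (2c + 2k + n - 2) g^(k-1) Φ`. Applying `tr` `m` times lowers `k` one step at a
time, and `g^m` restores it, so `g^m tr^m` acts on `g^k Φ` by the product of these factors for
`k, k-1, …, k-m+1`.
-/

open MvPolynomial Finset

/-- The index-counting (Euler) operator `N = Σᵢ yᵢ ∂/∂yᵢ` on `ℝ[y₁,…,yₙ]`. -/
noncomputable def opN (n : ℕ) : Module.End ℝ (MvPolynomial (Fin n) ℝ) :=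
  ∑ i : Fin n, (LinearMap.mulLeft ℝ (X i)) ∘ₗ (pderiv i).toLinearMap

/-- Multiplication by `Σᵢ yᵢ²` on `ℝ[y₁,…,yₙ]`. -/
noncomputable def opG (n : ℕ) : Module.End ℝ (MvPolynomial (Fin n) ℝ) :=
  LinearMap.mulLeft ℝ (∑ i : Fin n, X i ^ 2)

/-- The trace (Laplacian) operator `tr = Σᵢ ∂²/∂yᵢ²` on `ℝ[y₁,…,yₙ]`. -/
noncomputable def opTr (n : ℕ) : Module.End ℝ (MvPolynomial (Fin n) ℝ) :=
  ∑ i : Fin n, (pderiv i).toLinearMap ∘ₗ (pderiv i).toLinearMap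

theorem pderiv_sum_X_sq {R σ : Type*} [CommSemiring R] [Fintype σ] (i : σ) :
    pderiv i (∑ j : σ, (X j : MvPolynomial σ R) ^ 2) = 2 * X i := by
  rw [map_sum, sum_eq_single i]
  · rw [pow_two, pderiv_mul, pderiv_X_self]
    ring
  · intro j _ hj
    rw [pow_two, pderiv_mul, pderiv_X_of_ne hj]
    simp
  · simp

section Commutators

variable {n : ℕ} (p : MvPolynomial (Fin n) ℝ)

theorem opTr_opG_apply :
    opTr n (opG n p) = opG n (opTr n p) + (4 : ℝ) • opN n p + (2 * n : ℝ) • p := by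
  have pderiv_pderiv_mul_sum_X_sq (i : Fin n) :
      pderiv i (pderiv i ((∑ j : Fin n, X j ^ 2) * p)) =
        (∑ j : Fin n, X j ^ 2) * pderiv i (pderiv i p) + 4 * (X i * pderiv i p) + 2 * p := by
    have pderiv_two : pderiv i (2 : MvPolynomial (Fin n) ℝ) = 0 := by
      rw [← map_ofNat C 2, pderiv_C]
    simp only [pderiv_mul, pderiv_sum_X_sq, map_add, pderiv_X_self, pderiv_two]
    ring
  simp only [opTr, opG, opN, LinearMap.sum_apply, LinearMap.comp_apply,
    LinearMap.mulLeft_apply, Derivation.coeFn_coe]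
  rw [sum_congr rfl fun i _ => pderiv_pderiv_mul_sum_X_sq i, sum_add_distrib,
    sum_add_distrib, ← mul_sum, ← mul_sum, sum_const, card_univ,
    Fintype.card_fin, smul_eq_C_mul, smul_eq_C_mul, nsmul_eq_mul]
  simp only [map_mul, map_ofNat, map_natCast]
  ring

theorem opN_opG_apply : opN n (opG n p) = opG n (opN n p) + (2 : ℝ) • opG n p := by
  have X_mul_pderiv_mul_sum_X_sq (i : Fin n) :
      X i * pderiv i ((∑ j : Fin n, X j ^ 2) * p) =
        (∑ j : Fin n, X j ^ 2) * (X i * pderiv i p) + 2 * (X i ^ 2 * p) := by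
    rw [pderiv_mul, pderiv_sum_X_sq]
    ring
  simp only [opN, opG, LinearMap.sum_apply, LinearMap.comp_apply,
    LinearMap.mulLeft_apply, Derivation.coeFn_coe]
  rw [sum_congr rfl fun i _ => X_mul_pderiv_mul_sum_X_sq i, sum_add_distrib,
    ← mul_sum, ← mul_sum, ← sum_mul, smul_eq_C_mul, map_ofNat]

end Commutators

section HarmonicTimesPowerOfG

variable {n : ℕ} {Φ : MvPolynomial (Fin n) ℝ} {c : ℝ}

theorem opG_pow_succ_apply (k : ℕ) : (opG n ^ (k + 1)) Φ = opG n ((opG n ^ k) Φ) := by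
  rw [pow_succ', Module.End.mul_apply]

theorem opN_opG_pow_apply (hN : opN n Φ = c • Φ) (k : ℕ) :
    opN n ((opG n ^ k) Φ) = (c + 2 * k) • (opG n ^ k) Φ := by
  induction k with
  | zero => simpa using hN
  | succ k ih =>
    rw [opG_pow_succ_apply, opN_opG_apply, ih, map_smul]
    push_cast
    module

theorem opTr_opG_pow_succ_apply (hN : opN n Φ = c • Φ) (hT : opTr n Φ = 0) (k : ℕ) :
    opTr n ((opG n ^ (k + 1)) Φ) = (2 * (k + 1 : ℝ) * (2 * c + 2 * k + n)) • (opG n ^ k) Φ := by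
  induction k with
  | zero =>
    rw [opG_pow_succ_apply, pow_zero, Module.End.one_apply, opTr_opG_apply, hT, map_zero, hN]
    push_cast
    module
  | succ k ih =>
    rw [opG_pow_succ_apply, opTr_opG_apply, ih, map_smul, opN_opG_pow_apply hN,
      ← opG_pow_succ_apply]
    push_cast
    module

theorem opG_pow_mul_opTr_pow_apply_opG_pow (hN : opN n Φ = c • Φ) (hT : opTr n Φ = 0)
    (m k : ℕ) :
    (opG n ^ m * opTr n ^ m) ((opG n ^ k) Φ) =
      (∏ j ∈ range m, ((2 * (k : ℝ) - 2 * j) * (2 * c + 2 * k + n - 2 - 2 * j))) •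
        (opG n ^ k) Φ := by
  induction m generalizing k with
  | zero => simp
  | succ m ih =>
    have peel (x : MvPolynomial (Fin n) ℝ) :
        (opG n ^ (m + 1) * opTr n ^ (m + 1)) x = opG n ((opG n ^ m * opTr n ^ m) (opTr n x)) := by
      rw [pow_succ', pow_succ, mul_assoc, ← mul_assoc (opG n ^ m)]
      rfl
    rw [peel, prod_range_succ']
    cases k with
    | zero => simp [hT]
    | succ k =>
      rw [opTr_opG_pow_succ_apply hN hT, map_smul, ih, map_smul, map_smul,
        ← opG_pow_succ_apply, smul_smul, mul_comm]
      congr 2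
      · exact prod_congr rfl fun j _ => by push_cast; ring
      · push_cast
        ring

/-- for every `m ≥ 0`, the normal-ordered power `g^m ∘ tr^m` acts on
`g^k Φ` (with `Φ` harmonic homogeneous of degree `s`) by the Pochhammer-type scalar
`∏_{j=0}^{m−1} (2k−2j)(2s+2k+n−2−2j)`. -/
theorem stmt8 (n : ℕ) :
    ∀ (m s k : ℕ) (Φ : MvPolynomial (Fin n) ℝ),
      opN n Φ = (s : ℝ) • Φ → opTr n Φ = 0 →
      (opG n ^ m * opTr n ^ m) ((opG n ^ k) Φ) =
        (∏ j ∈ Finset.range m,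
          ((2 * (k : ℝ) - 2 * j) * (2 * s + 2 * k + n - 2 - 2 * j))) •
          (opG n ^ k) Φ :=
  fun m _ k _ hN hT => opG_pow_mul_opTr_pow_apply_opG_pow hN hT m k
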